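/- arXiv:2401.15014 — 3 statements merged into one kernel-verified Lean document; each statement's English description precedes it below -/
import Mathlib

section
/- Let λ > 0 be a random variable with density π(λ), and let β be a random variable whose conditional distribution given λ is normal with mean 0 and variance λ. Then the marginal density of β is heavy-tailed if and only if π(λ) is heavy-tailed, where a density p on ℝ (resp. on (0,∞)) is heavy-tailed if ∫ p(x) e^{tx} dx = ∞ for all t > 0. -/
/-! Given the mixing variance `λ`, the moment generating function of `N(0, λ)` at `t` is
`exp (λ t² / 2)`. By Tonelli, the moment generating function of the mixture at `t` is therefore
the moment generating function of the mixing density at `t² / 2`, and `t ↦ t² / 2` is a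
bijection of `(0, ∞)`. The mixture density is a Bochner integral; it agrees with the
corresponding lower integral wherever the latter is finite, which by the same Tonelli
computation at `t = 0` holds for almost every point. -/

open MeasureTheory Set Real ProbabilityTheory

lemma lintegral_ofReal_gaussianPDFReal_mul_exp (μ : ℝ) {v : NNReal} (hv : v ≠ 0) (t : ℝ) :
    ∫⁻ x, ENNReal.ofReal (gaussianPDFReal μ v x * rexp (t * x)) =
      ENNReal.ofReal (rexp (μ * t + v * t ^ 2 / 2)) := by
  have hmgf : ∫⁻ x, ENNReal.ofReal (rexp (t * x)) ∂gaussianReal μ v =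
      ENNReal.ofReal (mgf id (gaussianReal μ v) t) :=
    (ofReal_integral_eq_lintegral_ofReal (integrable_exp_mul_gaussianReal t)
      (ae_of_all _ fun _ => (exp_pos _).le)).symm
  rw [mgf_id_gaussianReal, gaussianReal_of_var_ne_zero μ hv,
    lintegral_withDensity_eq_lintegral_mul _ (measurable_gaussianPDF μ v) (by fun_prop)] at hmgf
  simpa only [Pi.mul_apply, gaussianPDF, ENNReal.ofReal_mul (gaussianPDFReal_nonneg μ v _)]
    using hmgf

section Mixture

variable {α β : Type*} [MeasurableSpace α] [MeasurableSpace β]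
  {μ : Measure α} {ν : Measure β} [SFinite μ] [SFinite ν] {K : α → β → ℝ} {w : α → ℝ}

lemma lintegral_lintegral_ofReal_mul_mul_eq (hK : Measurable (Function.uncurry K))
    (hw_nonneg : ∀ a, 0 ≤ w a) (hw : Measurable w) {h : β → ℝ} (hh : Measurable h) :
    ∫⁻ b, ∫⁻ a, ENNReal.ofReal (K a b * w a * h b) ∂μ ∂ν =
      ∫⁻ a, ENNReal.ofReal (w a) * ∫⁻ b, ENNReal.ofReal (K a b * h b) ∂ν ∂μ := by
  have hmeas : Measurable (Function.uncurry fun a b => ENNReal.ofReal (K a b * w a * h b)) :=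
    ((hK.mul (hw.comp measurable_fst)).mul (hh.comp measurable_snd)).ennreal_ofReal
  rw [← lintegral_lintegral_swap hmeas.aemeasurable]
  refine lintegral_congr fun a => ?_
  have hfactor : ∀ b, ENNReal.ofReal (K a b * w a * h b) =
      ENNReal.ofReal (w a) * ENNReal.ofReal (K a b * h b) := fun b => by
    rw [← ENNReal.ofReal_mul (hw_nonneg a)]
    ring_nf
  simp only [hfactor]
  exact lintegral_const_mul _ ((hK.comp measurable_prodMk_left).mul hh).ennreal_ofReal

theorem lintegral_ofReal_integral_mul_mul_eq (hK_nonneg : ∀ a b, 0 ≤ K a b)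
    (hK : Measurable (Function.uncurry K)) (hw_nonneg : ∀ a, 0 ≤ w a) (hw : Measurable w)
    (hfin : ∫⁻ a, ENNReal.ofReal (w a) * ∫⁻ b, ENNReal.ofReal (K a b) ∂ν ∂μ ≠ ⊤)
    {h : β → ℝ} (hh : Measurable h) :
    ∫⁻ b, ENNReal.ofReal ((∫ a, K a b * w a ∂μ) * h b) ∂ν =
      ∫⁻ a, ENNReal.ofReal (w a) * ∫⁻ b, ENNReal.ofReal (K a b * h b) ∂ν ∂μ := by
  have hKw_nonneg : ∀ a b, 0 ≤ K a b * w a := fun a b =>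
    mul_nonneg (hK_nonneg a b) (hw_nonneg a)
  have hKw : Measurable (Function.uncurry fun a b => K a b * w a) :=
    hK.mul (hw.comp measurable_fst)
  have hfin_ae : ∀ᵐ b ∂ν, ∫⁻ a, ENNReal.ofReal (K a b * w a) ∂μ < ⊤ := by
    refine ae_lt_top (hKw.ennreal_ofReal.lintegral_prod_left') ?_
    have htotal := lintegral_lintegral_ofReal_mul_mul_eq (μ := μ) (ν := ν) hK hw_nonneg hw
      (h := fun _ => 1) measurable_const
    simp only [mul_one] at htotal
    exact htotal.trans_ne hfin
  rw [← lintegral_lintegral_ofReal_mul_mul_eq hK hw_nonneg hw hh]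
  refine lintegral_congr_ae ?_
  filter_upwards [hfin_ae] with b hb
  rw [ENNReal.ofReal_mul (integral_nonneg fun a => hKw_nonneg a b),
    integral_eq_lintegral_of_nonneg_ae (ae_of_all _ fun a => hKw_nonneg a b)
      (hKw.comp measurable_prodMk_right).aestronglyMeasurable,
    ENNReal.ofReal_toReal hb.ne, ← lintegral_mul_const' _ _ ENNReal.ofReal_ne_top]
  simp only [← ENNReal.ofReal_mul (hKw_nonneg _ b)]

end Mixture

lemma gaussianPDFReal_zero_toNNReal {v : ℝ} (hv : 0 ≤ v) (x : ℝ) :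
    gaussianPDFReal 0 v.toNNReal x = (2 * π * v) ^ (-(1:ℝ)/2) * rexp (-(x ^ 2) / (2 * v)) := by
  rw [gaussianPDFReal, Real.coe_toNNReal v hv, sub_zero, sqrt_eq_rpow,
    ← rpow_neg (by positivity)]
  norm_num

theorem lintegral_scaleMixture_mul_exp {pdf : ℝ → ℝ} (hpdf_nonneg : ∀ l, 0 ≤ pdf l)
    (hpdf_meas : Measurable pdf) (hpdf_fin : ∫⁻ l in Ioi (0 : ℝ), ENNReal.ofReal (pdf l) ≠ ⊤)
    (t : ℝ) :
    ∫⁻ b, ENNReal.ofReal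
        ((∫ l in Ioi (0 : ℝ), gaussianPDFReal 0 l.toNNReal b * pdf l) * rexp (t * b)) =
      ∫⁻ l in Ioi (0 : ℝ), ENNReal.ofReal (pdf l * rexp (t ^ 2 / 2 * l)) := by
  have hK : Measurable (Function.uncurry fun (l b : ℝ) => gaussianPDFReal 0 l.toNNReal b) :=
    measurable_uncurry_gaussianPDFReal.comp
      (measurable_const.prodMk
        ((measurable_real_toNNReal.comp measurable_fst).prodMk measurable_snd))
  have hmgf : ∀ l ∈ Ioi (0 : ℝ), ∀ s : ℝ,
      ∫⁻ b, ENNReal.ofReal (gaussianPDFReal 0 l.toNNReal b * rexp (s * b)) =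
        ENNReal.ofReal (rexp (s ^ 2 / 2 * l)) := fun l hl s => by
    rw [lintegral_ofReal_gaussianPDFReal_mul_exp 0 (by simpa using hl),
      Real.coe_toNNReal l (le_of_lt hl)]
    ring_nf
  have hKpdf_fin : ∫⁻ l in Ioi (0 : ℝ), ENNReal.ofReal (pdf l) *
      ∫⁻ b, ENNReal.ofReal (gaussianPDFReal 0 l.toNNReal b) ≠ ⊤ := by
    refine ne_of_eq_of_ne (setLIntegral_congr_fun measurableSet_Ioi fun l hl => ?_) hpdf_fin
    simpa using congrArg (ENNReal.ofReal (pdf l) * ·) (hmgf l hl 0)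
  rw [lintegral_ofReal_integral_mul_mul_eq (fun l b => gaussianPDFReal_nonneg 0 l.toNNReal b) hK
    hpdf_nonneg hpdf_meas hKpdf_fin (by fun_prop)]
  refine setLIntegral_congr_fun measurableSet_Ioi fun l hl => ?_
  rw [hmgf l hl t, ENNReal.ofReal_mul (hpdf_nonneg l)]

theorem forall_pos_sq_div_two_iff {P : ℝ → Prop} :
    (∀ t > (0 : ℝ), P (t ^ 2 / 2)) ↔ ∀ s > (0 : ℝ), P s := by
  refine ⟨fun h s hs => ?_, fun h t ht => h _ (by positivity)⟩
  simpa only [sq_sqrt (by positivity : (0:ℝ) ≤ 2 * s), mul_div_cancel_left₀ s two_ne_zero]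
    using h (√(2 * s)) (by positivity)

/-- A scale mixture of centered normals
`pdfβ b = ∫₀^∞ (2pdfλ)^{-1/2} exp(-b²/(2λ)) pdf λ dλ`
is heavy-tailed iff the mixing density `pdf` is heavy-tailed. -/
theorem scaleMixture_heavyTailed_iff
    (pdf : ℝ → ℝ)
    (hpdf_nonneg : ∀ l, 0 ≤ pdf l)
    (hpdf_meas : Measurable pdf)
    (hpdf_int : ∫⁻ l in Ioi (0 : ℝ), ENNReal.ofReal (pdf l) = 1)
    (pdfβ : ℝ → ℝ)
    (hpdfβ : ∀ b, pdfβ b =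
      ∫ l in Ioi (0 : ℝ),
        (2 * Real.pi * l) ^ (-(1:ℝ)/2) * Real.exp (-(b ^ 2) / (2 * l)) * pdf l) :
    (∀ t > (0 : ℝ), ∫⁻ b : ℝ, ENNReal.ofReal (pdfβ b * Real.exp (t * b)) = ⊤)
      ↔ (∀ t > (0 : ℝ),
          ∫⁻ l in Ioi (0 : ℝ), ENNReal.ofReal (pdf l * Real.exp (t * l)) = ⊤) := by
  have hpdfβ_gaussian :
      pdfβ = fun b => ∫ l in Ioi (0 : ℝ), gaussianPDFReal 0 l.toNNReal b * pdf l :=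
    funext fun b => (hpdfβ b).trans <| setIntegral_congr_fun measurableSet_Ioi fun l hl => by
      rw [gaussianPDFReal_zero_toNNReal (le_of_lt hl)]
  have hpdf_fin : ∫⁻ l in Ioi (0 : ℝ), ENNReal.ofReal (pdf l) ≠ ⊤ :=
    hpdf_int ▸ ENNReal.one_ne_top
  simp only [hpdfβ_gaussian, lintegral_scaleMixture_mul_exp hpdf_nonneg hpdf_meas hpdf_fin]
  exact forall_pos_sq_div_two_iff
    (P := fun s => ∫⁻ l in Ioi (0 : ℝ), ENNReal.ofReal (pdf l * rexp (s * l)) = ⊤)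
end

section
/- Let D_ref be a p×p symmetric positive semidefinite matrix, N > 0, and β_sum ∈ ℝᵖ. For σ₀ > 0 define μ̂(σ₀) = (N·D_ref + σ₀^{-2} I)^{-1} N β_sum (the posterior mean under the Gaussian prior N(0, σ₀² I) with likelihood β_sum | β ~ N(D_ref β, D_ref/N)). If there exists an eigenvector v of D_ref with eigenvalue 0 such that ⟨v, β_sum⟩ ≠ 0, then ‖μ̂(σ₀)‖ → ∞ as σ₀ → ∞. In fact ‖μ̂(σ₀)‖ ≥ N σ₀² |⟨v, β_sum⟩| for unit v. -/
open Matrix Filter Real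

/-! Let `A = N • Dref + σ₀⁻² • 1`, which is positive definite, hence invertible. Since `Dref` is
symmetric and `Dref v = 0`, `v` is also a left eigenvector, `vᵀ A = σ₀⁻² vᵀ`, so
`σ₀⁻² ⟨v, μ̂⟩ = vᵀ A A⁻¹ (N βsum) = N ⟨v, βsum⟩`. Thus the component of `μ̂` along the unit vector
`v` is `N σ₀² ⟨v, βsum⟩`, and Cauchy–Schwarz bounds it by `‖μ̂‖`. -/

section

variable {n : Type*} [Fintype n]

lemma sq_dotProduct_le_dotProduct_self_mul_dotProduct_self (v w : n → ℝ) :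
    (v ⬝ᵥ w) ^ 2 ≤ (v ⬝ᵥ v) * (w ⬝ᵥ w) := by
  simpa only [dotProduct, sq] using Finset.sum_mul_sq_le_sq_mul_sq Finset.univ v w

lemma Matrix.IsHermitian.vecMul_eq_mulVec {R : Type*} [CommSemiring R] [StarRing R]
    [TrivialStar R] {A : Matrix n n R} (hA : A.IsHermitian) (v : n → R) :
    v ᵥ* A = A *ᵥ v := by
  rw [← mulVec_transpose, ← conjTranspose_eq_transpose_of_trivial, hA.eq]

lemma Matrix.mul_dotProduct_inv_mulVec_of_vecMul_eq_smul {R : Type*} [CommRing R]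
    [DecidableEq n] {A : Matrix n n R} (hA : IsUnit A.det) {c : R} {v : n → R}
    (hv : v ᵥ* A = c • v) (w : n → R) :
    c * (v ⬝ᵥ A⁻¹ *ᵥ w) = v ⬝ᵥ w := by
  rw [← smul_eq_mul, ← smul_dotProduct, ← hv, ← dotProduct_mulVec, mulVec_mulVec,
    mul_nonsing_inv A hA, one_mulVec]

lemma Matrix.PosSemidef.mul_dotProduct_inv_smul_add_smul_one_mulVec [DecidableEq n]
    {D : Matrix n n ℝ} (hD : D.PosSemidef) {a b : ℝ} (ha : 0 ≤ a) (hb : 0 < b)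
    {v : n → ℝ} (hv : D *ᵥ v = 0) (w : n → ℝ) :
    b * (v ⬝ᵥ (a • D + b • 1)⁻¹ *ᵥ w) = v ⬝ᵥ w := by
  have hdet : IsUnit (a • D + b • 1).det :=
    (isUnit_iff_isUnit_det _).1 (PosDef.posSemidef_add (hD.smul ha) (PosDef.one.smul hb)).isUnit
  refine mul_dotProduct_inv_mulVec_of_vecMul_eq_smul hdet ?_ w
  rw [vecMul_add, vecMul_smul, hD.isHermitian.vecMul_eq_mulVec, hv, smul_zero, zero_add,
    vecMul_smul, vecMul_one]

end

/-- divergence of the posterior mean under LD mismatch.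
If `v` is a unit eigenvector of the PSD matrix `Dref` with eigenvalue `0` and
`⟨v, βsum⟩ ≠ 0`, then the posterior mean
`μ̂(σ₀) = (N Dref + σ₀⁻² I)⁻¹ (N βsum)` satisfies
`‖μ̂(σ₀)‖ ≥ N σ₀² |⟨v, βsum⟩|`, and in particular `‖μ̂(σ₀)‖ → ∞` as `σ₀ → ∞`. -/
theorem posterior_mean_diverges
    (p : ℕ) (Dref : Matrix (Fin p) (Fin p) ℝ) (hD : Dref.PosSemidef)
    (N : ℝ) (hN : 0 < N) (βsum v : Fin p → ℝ)
    (hv_unit : v ⬝ᵥ v = 1)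
    (hv_null : Dref *ᵥ v = 0)
    (hv_sum : v ⬝ᵥ βsum ≠ 0)
    (μ : ℝ → Fin p → ℝ)
    (hμ : ∀ σ₀ : ℝ, μ σ₀ = (N • Dref + σ₀ ^ (-2 : ℤ) • (1 : Matrix (Fin p) (Fin p) ℝ))⁻¹ *ᵥ (N • βsum)) :
    (∀ σ₀ : ℝ, 0 < σ₀ →
      N * σ₀ ^ 2 * |v ⬝ᵥ βsum| ≤ Real.sqrt (μ σ₀ ⬝ᵥ μ σ₀)) ∧
    Tendsto (fun σ₀ => Real.sqrt (μ σ₀ ⬝ᵥ μ σ₀)) atTop atTop := by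
  have hbound : ∀ σ₀ : ℝ, 0 < σ₀ → N * σ₀ ^ 2 * |v ⬝ᵥ βsum| ≤ √(μ σ₀ ⬝ᵥ μ σ₀) := by
    intro σ₀ hσ₀
    have hproj : σ₀ ^ (-2 : ℤ) * (v ⬝ᵥ μ σ₀) = N * (v ⬝ᵥ βsum) := by
      rw [hμ, hD.mul_dotProduct_inv_smul_add_smul_one_mulVec hN.le (by positivity) hv_null,
        dotProduct_smul, smul_eq_mul]
    have hcomponent : v ⬝ᵥ μ σ₀ = N * σ₀ ^ 2 * (v ⬝ᵥ βsum) := by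
      rw [_root_.zpow_neg, zpow_ofNat] at hproj
      field_simp at hproj
      linarith
    calc N * σ₀ ^ 2 * |v ⬝ᵥ βsum| = |v ⬝ᵥ μ σ₀| := by
          rw [hcomponent, abs_mul, abs_of_pos (by positivity : 0 < N * σ₀ ^ 2)]
      _ ≤ √(μ σ₀ ⬝ᵥ μ σ₀) := abs_le_sqrt <| by
          simpa [hv_unit] using sq_dotProduct_le_dotProduct_self_mul_dotProduct_self v (μ σ₀)
  have hlower : Tendsto (fun σ₀ : ℝ => N * σ₀ ^ 2 * |v ⬝ᵥ βsum|) atTop atTop := by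
    have hc : 0 < N * |v ⬝ᵥ βsum| := by positivity
    exact ((tendsto_pow_atTop two_ne_zero).const_mul_atTop hc).congr fun σ₀ => by ring
  refine ⟨hbound, tendsto_atTop_mono' atTop ?_ hlower⟩
  filter_upwards [eventually_gt_atTop 0] using hbound
end

section
/- Let v ∈ ℝᵖ be a unit vector, β_sum ∈ ℝᵖ with c := ⟨v, β_sum⟩ ≠ 0, D_ref symmetric PSD with D_ref v = 0, and N_train, N_ref > 0. Then for all λ² > 0, N_train N_ref β_sumᵀ V (Δ² + λ^{-2} I)^{-1} Vᵀ β_sum ≥ N_train N_ref c² λ², where D_ref = V (Δ²/N_ref) Vᵀ is the spectral decomposition with v a column of V having eigenvalue 0. In particular the quadratic form grows at least linearly in λ². -/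
open Matrix

namespace Matrix

variable {n R : Type*} [Fintype n] [DecidableEq n]

theorem dotProduct_mulVec_conj_diagonal [CommRing R] (V : Matrix n n R) (d x : n → R) :
    x ⬝ᵥ ((V * diagonal d * Vᵀ) *ᵥ x) = ∑ l, d l * (Vᵀ *ᵥ x) l ^ 2 := by
  rw [← mulVec_mulVec, ← mulVec_mulVec, dotProduct_mulVec, ← mulVec_transpose]
  simp only [dotProduct, mulVec_diagonal]
  exact Finset.sum_congr rfl fun l _ => by ring

theorem mul_sq_transpose_mulVec_le_conj_diagonal
    [CommRing R] [LinearOrder R] [IsStrictOrderedRing R]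
    (V : Matrix n n R) {d : n → R} (hd : 0 ≤ d) (x : n → R) (k : n) :
    d k * (Vᵀ *ᵥ x) k ^ 2 ≤ x ⬝ᵥ ((V * diagonal d * Vᵀ) *ᵥ x) := by
  rw [dotProduct_mulVec_conj_diagonal]
  exact Finset.single_le_sum (fun l _ => mul_nonneg (hd l) (sq_nonneg _)) (Finset.mem_univ k)

end Matrix

theorem quadratic_form_lower_bound_general
    (p : ℕ) (V : Matrix (Fin p) (Fin p) ℝ)
    (Δsq : Fin p → ℝ) (hΔ : ∀ l, 0 ≤ Δsq l)
    (Nref Ntrain : ℝ) (hNref : 0 < Nref) (hNtrain : 0 < Ntrain)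
    (k : Fin p) (hk : Δsq k = 0)
    (v : Fin p → ℝ) (hv : v = fun i => V i k)
    (βsum : Fin p → ℝ) (c : ℝ) (hc : c = v ⬝ᵥ βsum)
    (lamsq : ℝ) (hlamsq : 0 < lamsq) :
    Ntrain * Nref * c ^ 2 * lamsq ≤
      Ntrain * Nref *
        (βsum ⬝ᵥ ((V * Matrix.diagonal (fun l => (Δsq l + lamsq⁻¹)⁻¹) * Vᵀ) *ᵥ βsum)) := by
  have hcoord : (Vᵀ *ᵥ βsum) k = c := by
    rw [hc, hv, mulVec_transpose, vecMul, dotProduct_comm]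
  have hweight : 0 ≤ fun l => (Δsq l + lamsq⁻¹)⁻¹ := fun l => by
    have := hΔ l
    positivity
  have hbound := mul_sq_transpose_mulVec_le_conj_diagonal V hweight βsum k
  rw [hk, zero_add, inv_inv, hcoord] at hbound
  rw [mul_assoc _ (c ^ 2), mul_comm (c ^ 2)]
  exact mul_le_mul_of_nonneg_left hbound (mul_pos hNtrain hNref).le

/-- key lower bound in the improper-posterior theorem.  If `v` is the
`k`-th column of the orthogonal eigenvector matrix `V` of
`Dref = N_ref⁻¹ V Δ² Vᵀ` with `Δ²ₖ = 0` and `c = ⟨v, βsum⟩ ≠ 0`, then for every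
`λ² > 0`,
`N_train N_ref βsumᵀ V (Δ² + λ⁻² I)⁻¹ Vᵀ βsum ≥ N_train N_ref c² λ²`. -/
theorem quadratic_form_lower_bound
    (p : ℕ) (V : Matrix (Fin p) (Fin p) ℝ) (hV : Vᵀ * V = 1)
    (Δsq : Fin p → ℝ) (hΔ : ∀ l, 0 ≤ Δsq l)
    (Nref Ntrain : ℝ) (hNref : 0 < Nref) (hNtrain : 0 < Ntrain)
    (Dref : Matrix (Fin p) (Fin p) ℝ)
    (hDref : Dref = Nref⁻¹ • (V * Matrix.diagonal Δsq * Vᵀ))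
    (k : Fin p) (hk : Δsq k = 0)
    (v : Fin p → ℝ) (hv : v = fun i => V i k)
    (βsum : Fin p → ℝ) (c : ℝ) (hc : c = v ⬝ᵥ βsum) (hc0 : c ≠ 0)
    (lamsq : ℝ) (hlamsq : 0 < lamsq) :
    Ntrain * Nref * c ^ 2 * lamsq ≤
      Ntrain * Nref *
        (βsum ⬝ᵥ ((V * Matrix.diagonal (fun l => (Δsq l + lamsq⁻¹)⁻¹) * Vᵀ) *ᵥ βsum)) :=
  quadratic_form_lower_bound_general p V Δsq hΔ Nref Ntrain hNref hNtrain k hk v hv βsum c hc lamsq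
    hlamsq
end
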